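/- arXiv:2605.00418 — 7 statements merged into one kernel-verified Lean document; each statement's English description precedes it below -/
import Mathlib

section
/- Let R be a commutative Noetherian ring and let M be a finitely generated R-module. If the localization M_p is zero for every associated prime p of R, then the trace ideal tr_R(M) is the zero ideal. -/
open scoped TensorProduct

/-- The trace ideal of an `R`-module `M`: the sum (supremum) of the ranges of all
`R`-linear maps `M → R`. -/
def traceIdeal (R : Type*) [CommRing R] (M : Type*) [AddCommGroup M] [Module R M] : Ideal R :=
  ⨆ f : M →ₗ[R] R, LinearMap.range f

theorem statement4 (R M : Type*) [CommRing R] [IsNoetherianRing R]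
    [AddCommGroup M] [Module R M] [Module.Finite R M]
    (h : ∀ (p : Ideal R) (hp : p ∈ associatedPrimes R R),
      haveI := hp.isPrime
      Subsingleton (LocalizedModule p.primeCompl M)) :
    traceIdeal R M = ⊥ := by
  rw [traceIdeal, eq_bot_iff, iSup_le_iff]
  intro f
  rintro r ⟨x, rfl⟩
  simp only [Ideal.mem_bot]
  by_contra hr
  obtain ⟨p, hp, hle⟩ := exists_le_isAssociatedPrime_of_isNoetherianRing R (f x) hr
  haveI := hp.isPrime
  have hsub := h p hp
  have : (LocalizedModule.mk x 1 : LocalizedModule p.primeCompl M) = LocalizedModule.mk 0 1 :=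
    Subsingleton.elim _ _
  obtain ⟨u, hu⟩ := LocalizedModule.mk_eq.mp this
  simp only [one_smul, smul_zero] at hu
  have hann : (u : R) ∈ (R ∙ (f x)).annihilator := by
    rw [Submodule.mem_annihilator_span_singleton]
    calc (u : R) • f x = f ((u : R) • x) := (map_smul f _ _).symm
    _ = f 0 := by rw [← hu]; rfl
    _ = 0 := map_zero f
  exact u.2 (hle (Submodule.mem_colon_singleton.mpr (by
    rw [Submodule.mem_bot]; exact (Submodule.mem_annihilator_span_singleton _ _).mp hann)))
end

section
/- Let R be a commutative ring and let M be an R-module. Then for every natural number k, the trace ideal of the (k+1)-st exterior power of M is contained in the trace ideal of the k-th exterior power: tr_R(⋀^{k+1} M) ⊆ tr_R(⋀^k M). -/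
open scoped TensorProduct

theorem statement5 (R M : Type*) [CommRing R] [AddCommGroup M] [Module R M] (k : ℕ) :
    traceIdeal R (⋀[R]^(k + 1) M) ≤ traceIdeal R (⋀[R]^k M) := by
  rw [traceIdeal]
  refine iSup_le fun f => ?_
  rintro r ⟨y, rfl⟩
  obtain ⟨x, hx⟩ := y
  have hx' : x ∈ Submodule.span R (Set.range (ExteriorAlgebra.ιMulti R (k + 1) (M := M))) := by
    rwa [ExteriorAlgebra.ιMulti_span_fixedDegree]
  have key : ∀ z ∈ Submodule.span R
      (Set.range (ExteriorAlgebra.ιMulti R (k + 1) (M := M))),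
      ∀ hz : z ∈ ⋀[R]^(k + 1) M, f ⟨z, hz⟩ ∈ traceIdeal R (⋀[R]^k M) := by
    intro z hz
    induction hz using Submodule.span_induction with
    | mem z hzmem =>
      obtain ⟨v, rfl⟩ := hzmem
      intro hz
      -- left multiplication by ι (v 0), as a map ⋀^k M → ⋀^(k+1) M
      have hmul : ∀ w ∈ ⋀[R]^k M,
          LinearMap.mulLeft R (ExteriorAlgebra.ι R (v 0)) w ∈ ⋀[R]^(k + 1) M := by
        intro w hw
        have h2 : ExteriorAlgebra.ι R (v 0) * w ∈
            LinearMap.range (ExteriorAlgebra.ι R (M := M)) ^ (k + 1) := by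
          rw [pow_succ']
          exact Submodule.mul_mem_mul (LinearMap.mem_range_self _ _) hw
        exact h2
      set L : (⋀[R]^k M) →ₗ[R] (⋀[R]^(k + 1) M) :=
        (LinearMap.mulLeft R (ExteriorAlgebra.ι R (v 0))).restrict hmul with hL
      have htail : ExteriorAlgebra.ιMulti R k (Matrix.vecTail v) ∈ ⋀[R]^k M :=
        ExteriorAlgebra.ιMulti_range R k (Set.mem_range_self _)
      have heq : f ⟨ExteriorAlgebra.ιMulti R (k + 1) v, hz⟩ =
          (f ∘ₗ L) ⟨ExteriorAlgebra.ιMulti R k (Matrix.vecTail v), htail⟩ := by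
        simp only [LinearMap.comp_apply]
        congr 1
        ext
        simp [hL, LinearMap.restrict_apply, ExteriorAlgebra.ιMulti_succ_apply v]
      rw [heq]
      exact Ideal.mem_iSup_of_mem (f ∘ₗ L) (LinearMap.mem_range_self _ _)
    | zero =>
      intro hz
      have : (⟨(0 : ExteriorAlgebra R M), hz⟩ : ⋀[R]^(k + 1) M) = 0 := rfl
      rw [this, map_zero]
      exact zero_mem _
    | add a b ha hb iha ihb =>
      intro hz
      have ha' : a ∈ ⋀[R]^(k + 1) M := by
        rwa [← ExteriorAlgebra.ιMulti_span_fixedDegree]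
      have hb' : b ∈ ⋀[R]^(k + 1) M := by
        rwa [← ExteriorAlgebra.ιMulti_span_fixedDegree]
      have : (⟨a + b, hz⟩ : ⋀[R]^(k + 1) M) = ⟨a, ha'⟩ + ⟨b, hb'⟩ := rfl
      rw [this, map_add]
      exact add_mem (iha ha') (ihb hb')
    | smul c a ha iha =>
      intro hz
      have ha' : a ∈ ⋀[R]^(k + 1) M := by
        rwa [← ExteriorAlgebra.ιMulti_span_fixedDegree]
      have : (⟨c • a, hz⟩ : ⋀[R]^(k + 1) M) = c • ⟨a, ha'⟩ := rfl
      rw [this, map_smul]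
      exact Submodule.smul_mem _ _ (iha ha')
  exact key x hx' hx
end

section
/- Let S₀ be a commutative ring and let S be a commutative local ring that is an S₀-algebra. If tr_S(Ω^i_{S/S₀}) = S for some natural number i, then tr_S(Ω^j_{S/S₀}) = S for every j with 0 ≤ j ≤ i. -/
open scoped TensorProduct

/-- Currying: from an alternating `i`-map valued at `v`, produce an alternating `j`-map
(for `j ≤ i`) with the same value at a suitable tuple. -/
lemma curry_aux {S M : Type*} [CommRing S] [AddCommGroup M] [Module S M] :
    ∀ (i j : ℕ), j ≤ i → ∀ (f : M [⋀^Fin i]→ₗ[S] S) (v : Fin i → M),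
      ∃ (g : M [⋀^Fin j]→ₗ[S] S) (w : Fin j → M), g w = f v := by
  intro i
  induction i with
  | zero =>
    intro j hj f v
    obtain rfl := Nat.le_zero.mp hj
    exact ⟨f, v, rfl⟩
  | succ i ih =>
    intro j hj f v
    rcases eq_or_lt_of_le hj with rfl | hlt
    · exact ⟨f, v, rfl⟩
    · obtain ⟨g, w, hg⟩ := ih j (Nat.lt_succ_iff.mp hlt) (f.curryLeft (v 0)) (Fin.tail v)
      refine ⟨g, w, ?_⟩
      rw [hg]
      simp only [AlternatingMap.curryLeft_apply_apply]
      congr 1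
      exact Fin.cons_self_tail v

theorem statement9 (S₀ S : Type*) [CommRing S₀] [CommRing S] [IsLocalRing S] [Algebra S₀ S]
    (i : ℕ) (h : traceIdeal S (⋀[S]^i (Ω[S⁄S₀])) = ⊤) :
    ∀ j ≤ i, traceIdeal S (⋀[S]^j (Ω[S⁄S₀])) = ⊤ := by
  intro j hj
  set M := Ω[S⁄S₀]
  -- Step 1: get f with range not contained in the maximal ideal
  have h1 : ∃ (f : (⋀[S]^i M) →ₗ[S] S) (x : ⋀[S]^i M), IsUnit (f x) := by
    by_contra hc
    push_neg at hc
    have : traceIdeal S (⋀[S]^i M) ≤ IsLocalRing.maximalIdeal S := by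
      refine iSup_le fun f => ?_
      rintro _ ⟨x, rfl⟩
      exact IsLocalRing.mem_maximalIdeal _ |>.mpr (hc f x)
    rw [h] at this
    exact (IsLocalRing.maximalIdeal.isMaximal S).ne_top (top_le_iff.mp this)
  obtain ⟨f, x, hfx⟩ := h1
  -- Step 2: find a pure wedge with unit image
  have h2 : ∃ v : Fin i → M, IsUnit (f ((ExteriorAlgebra.ιMulti S i).codRestrict
      (⋀[S]^i M) (fun v => ExteriorAlgebra.ιMulti_range S i ⟨v, rfl⟩) v)) := by
    by_contra hc
    push_neg at hc
    set p : Submodule S (⋀[S]^i M) := Submodule.comap f (IsLocalRing.maximalIdeal S) with hp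
    have hxp : x ∈ p := by
      have hspan : Submodule.span S (Set.range ((ExteriorAlgebra.ιMulti S i).codRestrict
          (⋀[S]^i M) (fun v => ExteriorAlgebra.ιMulti_range S i ⟨v, rfl⟩))) = ⊤ := by
        apply Submodule.map_injective_of_injective (Submodule.injective_subtype (⋀[S]^i M))
        rw [Submodule.map_span, Submodule.map_top, Submodule.range_subtype]
        have himg : ((⋀[S]^i M).subtype '' Set.range ((ExteriorAlgebra.ιMulti S i).codRestrict
            (⋀[S]^i M) (fun v => ExteriorAlgebra.ιMulti_range S i ⟨v, rfl⟩)))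
            = Set.range (ExteriorAlgebra.ιMulti S i (M := M)) := by
          ext y
          constructor
          · rintro ⟨z, ⟨v, rfl⟩, rfl⟩
            exact ⟨v, rfl⟩
          · rintro ⟨v, rfl⟩
            exact ⟨_, ⟨v, rfl⟩, rfl⟩
        rw [himg]
        exact ExteriorAlgebra.ιMulti_span_fixedDegree S i
      have : (⊤ : Submodule S (⋀[S]^i M)) ≤ p := by
        rw [← hspan]
        refine Submodule.span_le.mpr ?_
        rintro _ ⟨v, rfl⟩
        exact Submodule.mem_comap.mpr (IsLocalRing.mem_maximalIdeal _ |>.mpr (hc v))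
      exact this trivial
    exact mem_nonunits_iff.mp ((IsLocalRing.mem_maximalIdeal _).mp (Submodule.mem_comap.mp hxp)) hfx
  obtain ⟨v, hv⟩ := h2
  -- F : the alternating i-map with unit value at v
  set F : M [⋀^Fin i]→ₗ[S] S := f.compAlternatingMap
    ((ExteriorAlgebra.ιMulti S i).codRestrict (⋀[S]^i M)
      (fun v => ExteriorAlgebra.ιMulti_range S i ⟨v, rfl⟩)) with hF
  have hFv : IsUnit (F v) := hv
  -- Step 3: curry down to an alternating j-map
  obtain ⟨G, w, hG⟩ := curry_aux i j hj F v
  have hGw : IsUnit (G w) := hG ▸ hFv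
  -- Step 4: lift G to a linear map on ⋀^j
  set Gs : ∀ n, M [⋀^Fin n]→ₗ[S] S := fun n => if hn : n = j then hn ▸ G else 0 with hGs
  set g : (⋀[S]^j M) →ₗ[S] S :=
    (ExteriorAlgebra.liftAlternating Gs).comp (Submodule.subtype (⋀[S]^j M)) with hg
  have hgw : g (⟨ExteriorAlgebra.ιMulti S j w,
      ExteriorAlgebra.ιMulti_range S j ⟨w, rfl⟩⟩ : ⋀[S]^j M) = G w := by
    simp only [hg, LinearMap.comp_apply, Submodule.subtype_apply]
    rw [ExteriorAlgebra.liftAlternating_apply_ιMulti]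
    simp [hGs]
  apply Ideal.eq_top_of_isUnit_mem _ _ (hgw ▸ hGw)
  exact le_iSup (fun f : (⋀[S]^j M) →ₗ[S] S => LinearMap.range f) g ⟨_, rfl⟩
end

section
/- Let S₀ be a commutative ring and let S be a commutative local ring that is an S₀-algebra. Then tr_S(Ω_{S/S₀}) = S if and only if there exist an S₀-linear derivation D : S → S and an element t ∈ S with D(t) = 1. -/
open scoped TensorProduct

theorem statement10 (S₀ S : Type*) [CommRing S₀] [CommRing S] [IsLocalRing S] [Algebra S₀ S] :
    traceIdeal S (Ω[S⁄S₀]) = ⊤ ↔ ∃ (D : Derivation S₀ S S) (t : S), D t = 1 := by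
  constructor
  · intro h
    set A : Set S := {x | ∃ (D : Derivation S₀ S S) (t : S), D t = x} with hA
    have hle : traceIdeal S (Ω[S⁄S₀]) ≤ Ideal.span A := by
      refine iSup_le fun f => ?_
      rintro x ⟨m, rfl⟩
      have hm : m ∈ Submodule.span S (Set.range (KaehlerDifferential.D S₀ S)) := by
        rw [KaehlerDifferential.span_range_derivation]; trivial
      have hmem : f m ∈ Submodule.map f
          (Submodule.span S (Set.range (KaehlerDifferential.D S₀ S))) := ⟨m, hm, rfl⟩
      rw [Submodule.map_span] at hmem
      refine Submodule.span_le.mpr ?_ hmem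
      rintro _ ⟨_, ⟨t, rfl⟩, rfl⟩
      exact Ideal.subset_span ⟨f.compDer (KaehlerDifferential.D S₀ S), t, rfl⟩
    have hspan : Ideal.span A = ⊤ := top_unique (h ▸ hle)
    have hunit : ∃ a ∈ A, IsUnit a := by
      by_contra hc
      push_neg at hc
      have : Ideal.span A ≤ IsLocalRing.maximalIdeal S := by
        rw [Ideal.span_le]
        intro a ha
        exact hc a ha
      rw [hspan] at this
      exact (IsLocalRing.maximalIdeal.isMaximal S).ne_top (top_unique this)
    obtain ⟨a, ⟨D, t, rfl⟩, hu⟩ := hunit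
    obtain ⟨u, hu⟩ := hu
    refine ⟨(↑u⁻¹ : S) • D, t, ?_⟩
    rw [Derivation.smul_apply, smul_eq_mul, ← hu, Units.inv_mul]
  · rintro ⟨D, t, ht⟩
    rw [Ideal.eq_top_iff_one, traceIdeal]
    have h1 : (1 : S) ∈ LinearMap.range D.liftKaehlerDifferential :=
      ⟨KaehlerDifferential.D S₀ S t, by rw [Derivation.liftKaehlerDifferential_comp_D, ht]⟩
    exact (le_iSup (fun f : Ω[S⁄S₀] →ₗ[S] S => LinearMap.range f) _) h1
end

section
/- Let S₀ be a commutative ring, let T be a commutative S₀-algebra, let n be a natural number, and let S = T[x₁,…,xₙ] be the polynomial ring in n variables over T (an S₀-algebra via T). Then the trace ideal of the n-th exterior power of the module of Kähler differentials satisfies tr_S(Ω^n_{S/S₀}) = S. -/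
open scoped TensorProduct

theorem statement11 (S₀ T : Type*) [CommRing S₀] [CommRing T] [Algebra S₀ T] (n : ℕ) :
    traceIdeal (MvPolynomial (Fin n) T)
      (⋀[MvPolynomial (Fin n) T]^n (Ω[MvPolynomial (Fin n) T⁄S₀])) = ⊤ := by
  classical
  set S := MvPolynomial (Fin n) T with hS
  let D : Fin n → (Ω[S⁄S₀] →ₗ[S] S) := fun i =>
    ((MvPolynomial.pderiv i : Derivation T S S).restrictScalars S₀).liftKaehlerDifferential
  let Dmap : Ω[S⁄S₀] →ₗ[S] (Fin n → S) := LinearMap.pi D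
  let φ : Ω[S⁄S₀] [⋀^Fin n]→ₗ[S] S := Matrix.detRowAlternating.compLinearMap Dmap
  let F : ∀ i, Ω[S⁄S₀] [⋀^Fin i]→ₗ[S] S := fun i => if h : i = n then h ▸ φ else 0
  let L : ⋀[S]^n (Ω[S⁄S₀]) →ₗ[S] S :=
    (ExteriorAlgebra.liftAlternating F).comp (Submodule.subtype _)
  have hx : ExteriorAlgebra.ιMulti S n
      (fun i => KaehlerDifferential.D S₀ S (MvPolynomial.X i)) ∈ ⋀[S]^n (Ω[S⁄S₀]) :=
    ExteriorAlgebra.ιMulti_range S n ⟨_, rfl⟩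
  have h1 : L ⟨_, hx⟩ = 1 := by
    have : L ⟨_, hx⟩ = ExteriorAlgebra.liftAlternating F
        (ExteriorAlgebra.ιMulti S n (fun i => KaehlerDifferential.D S₀ S (MvPolynomial.X i))) :=
      rfl
    rw [this, ExteriorAlgebra.liftAlternating_apply_ιMulti]
    have hF : F n = φ := by simp [F]; rfl
    rw [hF]
    have hD : ∀ i j, D i (KaehlerDifferential.D S₀ S (MvPolynomial.X j)) =
        (1 : Matrix (Fin n) (Fin n) S) j i := by
      intro i j
      have := Derivation.liftKaehlerDifferential_comp
        ((MvPolynomial.pderiv (R := T) (σ := Fin n) i).restrictScalars S₀)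
      have h2 := DFunLike.congr_fun this (MvPolynomial.X j)
      simp only [Derivation.coe_comp, LinearMap.coe_comp, Function.comp_apply,
        Derivation.coeFn_coe, Derivation.restrictScalars_apply] at h2 ⊢
      rw [show D i (KaehlerDifferential.D S₀ S (MvPolynomial.X j)) =
        ((MvPolynomial.pderiv (R := T) (σ := Fin n) i).restrictScalars
          S₀).liftKaehlerDifferential.compDer (KaehlerDifferential.D S₀ S) (MvPolynomial.X j)
        from rfl, this]
      simp only [Derivation.restrictScalars_apply]
      rw [MvPolynomial.pderiv_X]
      simp [Matrix.one_apply, Pi.single_apply, eq_comm]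
    have : (fun j => Dmap (KaehlerDifferential.D S₀ S (MvPolynomial.X j))) =
        (1 : Matrix (Fin n) (Fin n) S) := by
      funext j i
      exact hD i j
    simp only [φ, AlternatingMap.compLinearMap_apply]
    rw [show (fun j => Dmap (KaehlerDifferential.D S₀ S (MvPolynomial.X j))) =
      (1 : Matrix (Fin n) (Fin n) S) from this]
    show Matrix.det (1 : Matrix (Fin n) (Fin n) S) = 1
    exact Matrix.det_one
  rw [Ideal.eq_top_iff_one]
  exact le_iSup (fun f : (⋀[S]^n (Ω[S⁄S₀])) →ₗ[S] S => LinearMap.range f) L ⟨⟨_, hx⟩, h1⟩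
end

section
/- Let k be a field of characteristic 0 and let R be a commutative Noetherian ring equipped with an ℕ-grading 𝒜 making R a graded k-algebra with R_0 = k (i.e. 𝒜 0 = k·1). Then the graded maximal ideal m_R of R (the irrelevant ideal, generated by all homogeneous elements of positive degree) is contained in the trace ideal tr_R(Ω_{R/k}) of the module of Kähler differentials. -/
open scoped TensorProduct

/-- The graded maximal (irrelevant) ideal of an `ℕ`-graded algebra: the ideal generated by
all homogeneous elements of positive degree. -/
def irrelevantIdeal {k R : Type*} [CommSemiring k] [CommRing R] [Algebra k R]
    (𝒜 : ℕ → Submodule k R) : Ideal R :=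
  Ideal.span {x : R | ∃ n : ℕ, 0 < n ∧ x ∈ 𝒜 n}

section Euler
variable {k R : Type*} [CommRing k] [CommRing R] [Algebra k R]
  (𝒜 : ℕ → Submodule k R) [GradedAlgebra 𝒜]

noncomputable def eulerMap : R →ₗ[k] R :=
  (DirectSum.toModule k ℕ R fun n => (n : ℕ) • (𝒜 n).subtype).comp
    (DirectSum.decomposeLinearEquiv 𝒜).toLinearMap

theorem eulerMap_of_mem {n : ℕ} {x : R} (hx : x ∈ 𝒜 n) : eulerMap 𝒜 x = n • x := by
  have h1 : DirectSum.decompose 𝒜 x = DirectSum.of (fun i => 𝒜 i) n ⟨x, hx⟩ :=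
    DirectSum.decompose_of_mem 𝒜 hx
  have h2 : DirectSum.decomposeLinearEquiv 𝒜 x = DirectSum.lof k ℕ (fun i => (𝒜 i)) n ⟨x, hx⟩ := by
    rw [DirectSum.decomposeLinearEquiv_apply, h1, DirectSum.lof_eq_of]
  simp only [eulerMap, LinearMap.comp_apply, LinearEquiv.coe_toLinearMap, h2,
    DirectSum.toModule_lof, LinearMap.smul_apply, Submodule.coe_subtype]

theorem eulerMap_leibniz (a b : R) :
    eulerMap 𝒜 (a * b) = a * eulerMap 𝒜 b + b * eulerMap 𝒜 a := by
  induction a using DirectSum.Decomposition.inductionOn 𝒜 with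
  | zero => simp
  | homogeneous a =>
    obtain ⟨a, ha⟩ := a
    induction b using DirectSum.Decomposition.inductionOn 𝒜 with
    | zero => simp
    | homogeneous b =>
      obtain ⟨b, hb⟩ := b
      rw [eulerMap_of_mem 𝒜 ha, eulerMap_of_mem 𝒜 hb,
        eulerMap_of_mem 𝒜 (SetLike.mul_mem_graded ha hb)]
      simp only [add_smul, mul_smul_comm]
      rw [mul_comm b a, add_comm]
    | add b b' hb hb' =>
      rw [mul_add, map_add, hb, hb', map_add]
      ring
  | add a a' ha ha' =>
    rw [add_mul, map_add, ha, ha', map_add]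
    ring

noncomputable def eulerDerivation : Derivation k R R where
  toLinearMap := eulerMap 𝒜
  map_one_eq_zero' := by
    have := eulerMap_of_mem 𝒜 (SetLike.one_mem_graded (A := 𝒜))
    simpa using this
  leibniz' := fun a b => by
    simpa [smul_eq_mul] using eulerMap_leibniz 𝒜 a b

end Euler

theorem statement13 (k R : Type*) [Field k] [CharZero k]
    [CommRing R] [IsNoetherianRing R] [Algebra k R]
    (𝒜 : ℕ → Submodule k R) [GradedAlgebra 𝒜] (h0 : 𝒜 0 = 1) :
    irrelevantIdeal 𝒜 ≤ traceIdeal R (Ω[R⁄k]) := by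
  rw [irrelevantIdeal, Ideal.span_le]
  rintro x ⟨n, hn, hx⟩
  set D : Derivation k R R := eulerDerivation 𝒜
  set f : Ω[R⁄k] →ₗ[R] R := D.liftKaehlerDifferential with hf
  have hfx : f (KaehlerDifferential.D k R x) = n • x := by
    rw [hf, Derivation.liftKaehlerDifferential_comp_D]
    exact eulerMap_of_mem 𝒜 hx
  have hn0 : ((n : k)) ≠ 0 := Nat.cast_ne_zero.2 hn.ne'
  have hmem : x ∈ LinearMap.range f := by
    refine ⟨(n : k)⁻¹ • KaehlerDifferential.D k R x, ?_⟩
    rw [LinearMap.map_smul_of_tower, hfx, ← Nat.cast_smul_eq_nsmul k, inv_smul_smul₀ hn0]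
  exact le_iSup (fun g : Ω[R⁄k] →ₗ[R] R => LinearMap.range g) f hmem
end

section
/- Let A be a commutative local ring and let M be a finitely generated torsion-free A-module (i.e. the torsion submodule of M is zero). Suppose that the localization of M at the set of non-zero-divisors of A is isomorphic, as a module over the total quotient ring Q(A), to Q(A) itself. If tr_A(M) = A, then M is isomorphic to A as an A-module. -/
open scoped TensorProduct

theorem statement19 (A M : Type*) [CommRing A] [IsLocalRing A]
    [AddCommGroup M] [Module A M] [Module.Finite A M]
    (htf : Submodule.torsion A M = ⊥)
    (hloc : Nonempty
      (LocalizedModule (nonZeroDivisors A) M ≃ₗ[Localization (nonZeroDivisors A)]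
        Localization (nonZeroDivisors A)))
    (htr : traceIdeal A M = ⊤) :
    Nonempty (M ≃ₗ[A] A) := by
  classical
  set S := nonZeroDivisors A with hS
  -- Step 1: get a surjective linear map `f : M → A`
  have hex : ∃ f : M →ₗ[A] A, Function.Surjective f := by
    by_contra h
    push_neg at h
    have hle : traceIdeal A M ≤ IsLocalRing.maximalIdeal A := by
      refine iSup_le fun f => IsLocalRing.le_maximalIdeal fun hr => ?_
      exact h f (LinearMap.range_eq_top.mp hr)
    rw [htr, top_le_iff] at hle
    exact (IsLocalRing.maximalIdeal.isMaximal A).ne_top hle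
  obtain ⟨f, hf⟩ := hex
  obtain ⟨e⟩ := hloc
  -- Step 2: localize `f`
  let Loc := Localization S
  let F0 : LocalizedModule S M →ₗ[A] Loc :=
    IsLocalizedModule.map S (LocalizedModule.mkLinearMap S M) (Algebra.linearMap A Loc) f
  let F : LocalizedModule S M →ₗ[Loc] Loc := F0.extendScalarsOfIsLocalization S Loc
  have hFsurj : Function.Surjective F := by
    have : Function.Surjective F0 :=
      IsLocalizedModule.map_surjective S (LocalizedModule.mkLinearMap S M)
        (Algebra.linearMap A Loc) f hf
    exact this
  -- Step 3: the composite endomorphism of `Loc` is surjective, hence injective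
  let g : Loc →ₗ[Loc] Loc := F ∘ₗ (e.symm : Loc →ₗ[Loc] LocalizedModule S M)
  have hgsurj : Function.Surjective g := hFsurj.comp e.symm.surjective
  have hginj : Function.Injective g :=
    OrzechProperty.injective_of_surjective_endomorphism g hgsurj
  have hFinj : Function.Injective F := by
    have : (F : LocalizedModule S M → Loc) = g ∘ e := by
      funext x
      simp [g, Function.comp]
    rw [this]
    exact hginj.comp e.injective
  -- Step 4: `f` is injective using torsion-freeness
  have hfinj : Function.Injective f := by
    rw [injective_iff_map_eq_zero]
    intro x hx
    have h1 : F0 (LocalizedModule.mkLinearMap S M x) = Algebra.linearMap A Loc (f x) :=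
      IsLocalizedModule.map_apply S (LocalizedModule.mkLinearMap S M)
        (Algebra.linearMap A Loc) f x
    have h2 : F (LocalizedModule.mkLinearMap S M x) = 0 := by
      show F0 (LocalizedModule.mkLinearMap S M x) = 0
      rw [h1, hx, map_zero]
    have h3 : LocalizedModule.mkLinearMap S M x = 0 := by
      apply hFinj
      rw [h2, map_zero]
    obtain ⟨s, hs⟩ := (IsLocalizedModule.eq_zero_iff S (LocalizedModule.mkLinearMap S M)).mp h3
    have : x ∈ Submodule.torsion A M := ⟨s, hs⟩
    rw [htf] at this
    exact this
  exact ⟨LinearEquiv.ofBijective f ⟨hfinj, hf⟩⟩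
end
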